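/- If γ = ⟨V, E, r⟩ is a finite tree, v ∈ V is an internal vertex (out-degree at least 1) distinct from r, and γ' = ⟨V', E', r', f⟩ is a finite tree with a distinguished leaf f (the foot node) and V ∩ V' = ∅, then the adjunction result γ[v, γ'] — obtained by deleting v, connecting the parent of v to r', and connecting f to all former children of v — is again a finite tree with root r. -/

import Mathlib

attribute [local instance] Classical.propDecidable

/-- A finite tree: a directed graph `⟨V, E, r⟩` with no directed cycles,
root `r` of in-degree 0, every other vertex of in-degree exactly 1,
and every vertex reachable from `r`. -/
def IsFinTree {α : Type*} (V : Finset α) (E : Finset (α × α)) (r : α) : Prop :=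
  r ∈ V ∧
  (∀ e ∈ E, e.1 ∈ V ∧ e.2 ∈ V) ∧
  (∀ v : α, ¬ Relation.TransGen (fun a b => (a, b) ∈ E) v v) ∧
  (∀ e ∈ E, e.2 ≠ r) ∧
  (∀ v ∈ V, v ≠ r → ∃! u : α, (u, v) ∈ E) ∧
  (∀ v ∈ V, Relation.ReflTransGen (fun a b => (a, b) ∈ E) r v)

/-!
Since `V` and `V'` are disjoint, every vertex other than `r` still has exactly one parent (for `r'`
it is the old parent of `v`, for the old children of `v` it is `f`), and a path from `r` in `γ`
becomes one in the new graph once each passage through `v` is replaced by the `γ'`-path from `r'`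
to `f`. Acyclicity is then automatic: with unique parents and a parentless root, a vertex
reachable from the root lies on no cycle.
-/

open Relation

theorem Relation.not_transGen_self_of_reflTransGen {α : Type*} {S : α → α → Prop} {r x : α}
    (hroot : ∀ a, ¬ S a r) (huniq : ∀ {a a' b}, S a b → S a' b → a = a')
    (hx : ReflTransGen S r x) : ¬ TransGen S x x := by
  induction hx with
  | refl =>
    intro hcyc
    obtain ⟨a, -, ha⟩ := TransGen.tail'_iff.mp hcyc
    exact hroot a ha
  | @tail y x _ hyx ih =>
    intro hcyc
    obtain ⟨z, hxz, hzx⟩ := TransGen.tail'_iff.mp hcyc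
    obtain rfl : z = y := huniq hzx hyx
    exact ih (TransGen.head' hyx hxz)

namespace IsFinTree

variable {α : Type*} {V : Finset α} {E : Finset (α × α)} {r a b : α}

theorem root_mem (hT : IsFinTree V E r) : r ∈ V := hT.1

theorem fst_mem (hT : IsFinTree V E r) (h : (a, b) ∈ E) : a ∈ V := (hT.2.1 _ h).1

theorem snd_mem (hT : IsFinTree V E r) (h : (a, b) ∈ E) : b ∈ V := (hT.2.1 _ h).2

theorem snd_ne_root (hT : IsFinTree V E r) (h : (a, b) ∈ E) : b ≠ r := hT.2.2.2.1 _ h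

theorem irrefl (hT : IsFinTree V E r) (a : α) : (a, a) ∉ E :=
  fun h => hT.2.2.1 a (TransGen.single h)

theorem existsUnique_parent (hT : IsFinTree V E r) (hb : b ∈ V) (hbr : b ≠ r) :
    ∃! u, (u, b) ∈ E :=
  hT.2.2.2.2.1 b hb hbr

theorem reflTransGen (hT : IsFinTree V E r) (hb : b ∈ V) :
    ReflTransGen (fun a b => (a, b) ∈ E) r b :=
  hT.2.2.2.2.2 b hb

theorem of_existsUnique_parent (hr : r ∈ V) (hE : ∀ e ∈ E, e.1 ∈ V ∧ e.2 ∈ V)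
    (hroot : ∀ e ∈ E, e.2 ≠ r) (hpar : ∀ v ∈ V, v ≠ r → ∃! u, (u, v) ∈ E)
    (hreach : ∀ v ∈ V, ReflTransGen (fun a b => (a, b) ∈ E) r v) :
    IsFinTree V E r := by
  refine ⟨hr, hE, fun x hcyc => ?_, hroot, hpar, hreach⟩
  obtain ⟨z, -, hzx⟩ := TransGen.tail'_iff.mp hcyc
  have hxV : x ∈ V := (hE _ hzx).2
  refine not_transGen_self_of_reflTransGen (S := fun a b => (a, b) ∈ E)
    (fun a ha => hroot (a, r) ha rfl) ?_ (hreach x hxV) hcyc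
  intro a a' b ha ha'
  exact (hpar b (hE _ ha).2 (hroot _ ha)).unique ha ha'

end IsFinTree

section Adjunction

variable {α : Type*} {V V' : Finset α} {E E' : Finset (α × α)} {r r' v f a b : α}

noncomputable def adjoinEdges (E E' : Finset (α × α)) (v r' f : α) : Finset (α × α) :=
  (E.filter (fun e => e.1 ≠ v ∧ e.2 ≠ v)) ∪ E' ∪
    ((E.filter (fun e => e.2 = v)).image (fun e => (e.1, r'))) ∪
    ((E.filter (fun e => e.1 = v)).image (fun e => (f, e.2)))

theorem mem_adjoinEdges : (a, b) ∈ adjoinEdges E E' v r' f ↔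
    ((a, b) ∈ E ∧ a ≠ v ∧ b ≠ v) ∨ (a, b) ∈ E' ∨ ((a, v) ∈ E ∧ b = r') ∨
      (a = f ∧ (v, b) ∈ E) := by
  simp only [adjoinEdges, Finset.mem_union, Finset.mem_filter, Finset.mem_image, Prod.ext_iff]
  aesop

theorem mem_adjoinEdges_iff_of_mem_left (hT' : IsFinTree V' E' r') (hdisj : Disjoint V V')
    (hb : b ∈ V) (hbv : b ≠ v) :
    (a, b) ∈ adjoinEdges E E' v r' f ↔ ((a, b) ∈ E ∧ a ≠ v) ∨ (a = f ∧ (v, b) ∈ E) := by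
  have hbV' : b ∉ V' := Finset.disjoint_left.mp hdisj hb
  rw [mem_adjoinEdges]
  constructor
  · rintro (⟨h, hav, -⟩ | h | ⟨-, rfl⟩ | h)
    · exact .inl ⟨h, hav⟩
    · exact absurd (hT'.snd_mem h) hbV'
    · exact absurd hT'.root_mem hbV'
    · exact .inr h
  · rintro (⟨h, hav⟩ | h)
    · exact .inl ⟨h, hav, hbv⟩
    · exact .inr (.inr (.inr h))

theorem mem_adjoinEdges_root_iff (hT : IsFinTree V E r) (hT' : IsFinTree V' E' r')
    (hdisj : Disjoint V V') : (a, r') ∈ adjoinEdges E E' v r' f ↔ (a, v) ∈ E := by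
  have hr'V : r' ∉ V := Finset.disjoint_right.mp hdisj hT'.root_mem
  rw [mem_adjoinEdges]
  constructor
  · rintro (⟨h, -⟩ | h | ⟨h, -⟩ | ⟨-, h⟩)
    · exact absurd (hT.snd_mem h) hr'V
    · exact absurd rfl (hT'.snd_ne_root h)
    · exact h
    · exact absurd (hT.snd_mem h) hr'V
  · exact fun h => .inr (.inr (.inl ⟨h, rfl⟩))

theorem mem_adjoinEdges_iff_of_mem_right (hT : IsFinTree V E r) (hdisj : Disjoint V V')
    (hb : b ∈ V') (hbr' : b ≠ r') : (a, b) ∈ adjoinEdges E E' v r' f ↔ (a, b) ∈ E' := by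
  have hbV : b ∉ V := Finset.disjoint_right.mp hdisj hb
  rw [mem_adjoinEdges]
  constructor
  · rintro (⟨h, -⟩ | h | ⟨-, h⟩ | ⟨-, h⟩)
    · exact absurd (hT.snd_mem h) hbV
    · exact h
    · exact absurd h hbr'
    · exact absurd (hT.snd_mem h) hbV
  · exact fun h => .inr (.inl h)

theorem adjoinEdges_mem_vertices (hT : IsFinTree V E r) (hT' : IsFinTree V' E' r')
    (hv : v ∈ V) (hf : f ∈ V') (hdisj : Disjoint V V') :
    ∀ e ∈ adjoinEdges E E' v r' f, e.1 ∈ (V ∪ V').erase v ∧ e.2 ∈ (V ∪ V').erase v := by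
  have hvV' : v ∉ V' := Finset.disjoint_left.mp hdisj hv
  have mem_left {x} (hx : x ∈ V) (hxv : x ≠ v) : x ∈ (V ∪ V').erase v :=
    Finset.mem_erase.2 ⟨hxv, Finset.mem_union_left _ hx⟩
  have mem_right {x} (hx : x ∈ V') : x ∈ (V ∪ V').erase v :=
    Finset.mem_erase.2 ⟨ne_of_mem_of_not_mem hx hvV', Finset.mem_union_right _ hx⟩
  rintro ⟨a, b⟩ he
  rcases mem_adjoinEdges.mp he with ⟨h, hav, hbv⟩ | h | ⟨h, rfl⟩ | ⟨rfl, h⟩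
  · exact ⟨mem_left (hT.fst_mem h) hav, mem_left (hT.snd_mem h) hbv⟩
  · exact ⟨mem_right (hT'.fst_mem h), mem_right (hT'.snd_mem h)⟩
  · exact ⟨mem_left (hT.fst_mem h) fun hav => hT.irrefl v (hav ▸ h), mem_right hT'.root_mem⟩
  · exact ⟨mem_right hf, mem_left (hT.snd_mem h) fun hbv => hT.irrefl v (hbv ▸ h)⟩

theorem adjoinEdges_snd_ne_root (hT : IsFinTree V E r) (hT' : IsFinTree V' E' r')
    (hdisj : Disjoint V V') : ∀ e ∈ adjoinEdges E E' v r' f, e.2 ≠ r := by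
  have hrV' : r ∉ V' := Finset.disjoint_left.mp hdisj hT.root_mem
  rintro ⟨a, b⟩ he
  rcases mem_adjoinEdges.mp he with ⟨h, -⟩ | h | ⟨-, rfl⟩ | ⟨-, h⟩
  · exact hT.snd_ne_root h
  · exact ne_of_mem_of_not_mem (hT'.snd_mem h) hrV'
  · exact ne_of_mem_of_not_mem hT'.root_mem hrV'
  · exact hT.snd_ne_root h

theorem adjoinEdges_existsUnique_parent (hT : IsFinTree V E r) (hT' : IsFinTree V' E' r')
    (hv : v ∈ V) (hvr : v ≠ r) (hdisj : Disjoint V V') (hb : b ∈ (V ∪ V').erase v)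
    (hbr : b ≠ r) : ∃! u, (u, b) ∈ adjoinEdges E E' v r' f := by
  simp only [Finset.mem_erase, Finset.mem_union] at hb
  obtain ⟨hbv, hb | hb⟩ := hb
  · simp_rw [mem_adjoinEdges_iff_of_mem_left hT' hdisj hb hbv]
    obtain ⟨u, hu, huniq⟩ := hT.existsUnique_parent hb hbr
    obtain rfl | huv := eq_or_ne u v
    · refine ⟨f, .inr ⟨rfl, hu⟩, ?_⟩
      rintro a (⟨ha, hau⟩ | ⟨rfl, -⟩)
      · exact absurd (huniq a ha) hau
      · rfl
    · refine ⟨u, .inl ⟨hu, huv⟩, ?_⟩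
      rintro a (⟨ha, -⟩ | ⟨-, hvb⟩)
      · exact huniq a ha
      · exact absurd (huniq v hvb).symm huv
  · obtain rfl | hbr' := eq_or_ne b r'
    · simp_rw [mem_adjoinEdges_root_iff hT hT' hdisj]
      exact hT.existsUnique_parent hv hvr
    · simp_rw [mem_adjoinEdges_iff_of_mem_right hT hdisj hb hbr']
      exact hT'.existsUnique_parent hb hbr'

theorem reflTransGen_adjoinEdges_of_right {x y : α}
    (h : ReflTransGen (fun a b => (a, b) ∈ E') x y) :
    ReflTransGen (fun a b => (a, b) ∈ adjoinEdges E E' v r' f) x y :=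
  ReflTransGen.mono (fun _ _ hab => mem_adjoinEdges.2 (.inr (.inl hab))) _ _ h

theorem reflTransGen_adjoinEdges_of_mem (hT : IsFinTree V E r) (hT' : IsFinTree V' E' r')
    (hf : f ∈ V') (h : (a, b) ∈ E) :
    ReflTransGen (fun a b => (a, b) ∈ adjoinEdges E E' v r' f)
      (Function.update id v r' a) (Function.update id v r' b) := by
  obtain rfl | hav := eq_or_ne a v
  · have hba : b ≠ a := fun hba => hT.irrefl a (hba ▸ h)
    rw [Function.update_self, Function.update_of_ne hba, id]
    exact (reflTransGen_adjoinEdges_of_right (hT'.reflTransGen hf)).tail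
      (mem_adjoinEdges.2 (.inr (.inr (.inr ⟨rfl, h⟩))))
  · rw [Function.update_of_ne hav, id]
    obtain rfl | hbv := eq_or_ne b v
    · rw [Function.update_self]
      exact .single (mem_adjoinEdges.2 (.inr (.inr (.inl ⟨h, rfl⟩))))
    · rw [Function.update_of_ne hbv, id]
      exact .single (mem_adjoinEdges.2 (.inl ⟨h, hav, hbv⟩))

theorem adjoinEdges_reflTransGen (hT : IsFinTree V E r) (hT' : IsFinTree V' E' r')
    (hv : v ∈ V) (hvr : v ≠ r) (hf : f ∈ V') (hb : b ∈ (V ∪ V').erase v) :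
    ReflTransGen (fun a b => (a, b) ∈ adjoinEdges E E' v r' f) r b := by
  have hlift {x} (hx : x ∈ V) :
      ReflTransGen (fun a b => (a, b) ∈ adjoinEdges E E' v r' f) r (Function.update id v r' x) := by
    simpa only [Function.onFun, Function.update_of_ne hvr.symm, id] using (hT.reflTransGen hx).lift'
      (Function.update id v r') fun _ _ => reflTransGen_adjoinEdges_of_mem hT hT' hf
  simp only [Finset.mem_erase, Finset.mem_union] at hb
  obtain ⟨hbv, hb | hb⟩ := hb
  · simpa only [Function.update_of_ne hbv, id] using hlift hb
  · have hrr' := hlift hv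
    rw [Function.update_self] at hrr'
    exact hrr'.trans (reflTransGen_adjoinEdges_of_right (hT'.reflTransGen hb))

end Adjunction

theorem adjunction_isFinTree_general {α : Type*}
    (V V' : Finset α) (E E' : Finset (α × α)) (r r' v f : α)
    (hT : IsFinTree V E r) (hT' : IsFinTree V' E' r')
    (hv : v ∈ V) (hvr : v ≠ r)
    (hf : f ∈ V')
    (hdisj : Disjoint V V') :
    IsFinTree ((V ∪ V').erase v)
      ((E.filter (fun e => e.1 ≠ v ∧ e.2 ≠ v)) ∪ E' ∪
        ((E.filter (fun e => e.2 = v)).image (fun e => (e.1, r'))) ∪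
        ((E.filter (fun e => e.1 = v)).image (fun e => (f, e.2)))) r :=
  IsFinTree.of_existsUnique_parent
    (Finset.mem_erase.2 ⟨hvr.symm, Finset.mem_union_left _ hT.root_mem⟩)
    (adjoinEdges_mem_vertices hT hT' hv hf hdisj)
    (adjoinEdges_snd_ne_root hT hT' hdisj)
    (fun _ hb hbr => adjoinEdges_existsUnique_parent hT hT' hv hvr hdisj hb hbr)
    (fun _ hb => adjoinEdges_reflTransGen hT hT' hv hvr hf hb)

/-- Adjunction: if `γ = ⟨V, E, r⟩` is a finite tree, `v ∈ V` an internal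
(out-degree ≥ 1) non-root vertex, and `γ' = ⟨V', E', r', f⟩` a finite tree
with a distinguished leaf `f` (the foot node), vertex sets disjoint, then the
graph obtained by deleting `v`, connecting the parent of `v` to `r'`, and
connecting `f` to all former children of `v` is again a finite tree with root `r`. -/
theorem adjunction_isFinTree {α : Type*}
    (V V' : Finset α) (E E' : Finset (α × α)) (r r' v f : α)
    (hT : IsFinTree V E r) (hT' : IsFinTree V' E' r')
    (hv : v ∈ V) (hvr : v ≠ r)
    (hinternal : ∃ w : α, (v, w) ∈ E)
    (hf : f ∈ V') (hfleaf : ∀ w : α, (f, w) ∉ E')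
    (hdisj : Disjoint V V') :
    IsFinTree ((V ∪ V').erase v)
      ((E.filter (fun e => e.1 ≠ v ∧ e.2 ≠ v)) ∪ E' ∪
        ((E.filter (fun e => e.2 = v)).image (fun e => (e.1, r'))) ∪
        ((E.filter (fun e => e.1 = v)).image (fun e => (f, e.2)))) r :=
  adjunction_isFinTree_general V V' E E' r r' v f hT hT' hv hvr hf hdisj
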